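/- arXiv:0904.1902 — 3 statements merged into one kernel-verified Lean document; each statement's English description precedes it below -/
import Mathlib

section
/- Let G be a finite connected simple graph, T a spanning tree of G, and B a nontrivial biconnected component of G with vertex set V_B. Then T[V_B], the subgraph of T induced by V_B, is a spanning tree of B: it is a tree, it is a subgraph of B, and its vertex set is all of V_B. -/
/-!
A path of `G` joining two vertices `a ≠ b` of a block `B` whose interior avoids `B` is an ear:
`B` plus the ear is still biconnected, so by maximality the ear lies in `B`. If a path of `G`
between two vertices of `B` ever left `B`, its stretch up to the next vertex of `B` would be
such an ear; hence such paths stay inside `B`, and edges of `G` between vertices of `B` are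
edges of `B`. Applied to the paths of `T`, this makes `T[V_B]` connected, and it is acyclic as
an induced subgraph of the tree `T`.
-/

open SimpleGraph

/-- `H` is a biconnected subgraph of `G`: it is connected and has no cut vertex,
i.e. removing any single vertex leaves it connected. -/
def IsBiconnected {V : Type} (G : SimpleGraph V) (H : G.Subgraph) : Prop :=
  H.coe.Connected ∧ ∀ v ∈ H.verts, ((H.deleteVerts {v}).coe).Connected

/-- `H` is a biconnected component (block) of `G`: a maximal biconnected subgraph. -/
def IsBiconnectedComponent {V : Type} (G : SimpleGraph V) (H : G.Subgraph) : Prop :=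
  IsBiconnected G H ∧ ∀ H' : G.Subgraph, IsBiconnected G H' → H ≤ H' → H' = H

namespace SimpleGraph

variable {V : Type} {G : SimpleGraph V}

namespace Subgraph

theorem deleteVerts_sup (H K : G.Subgraph) (s : Set V) :
    (H ⊔ K).deleteVerts s = H.deleteVerts s ⊔ K.deleteVerts s := by
  ext x y
  · simp [Set.union_sdiff_distrib]
  · simp only [deleteVerts_adj, sup_adj, verts_sup, Set.mem_union]
    constructor
    · rintro ⟨-, hx, -, hy, h | h⟩
      exacts [.inl ⟨h.fst_mem, hx, h.snd_mem, hy, h⟩, .inr ⟨h.fst_mem, hx, h.snd_mem, hy, h⟩]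
    · rintro (⟨hx, hxs, hy, hys, h⟩ | ⟨hx, hxs, hy, hys, h⟩)
      exacts [⟨.inl hx, hxs, .inl hy, hys, .inl h⟩, ⟨.inr hx, hxs, .inr hy, hys, .inr h⟩]

theorem deleteVerts_of_disjoint {H : G.Subgraph} {s : Set V} (h : Disjoint H.verts s) :
    H.deleteVerts s = H := by
  rw [← deleteVerts_inter_verts_left_eq, h.inter_eq, deleteVerts_empty]

end Subgraph

namespace Walk

theorem toSubgraph_cons_deleteVerts {u w v : V} (h : G.Adj u w) (p : G.Walk w v)
    (hu : u ∉ p.support) : (p.cons h).toSubgraph.deleteVerts {u} = p.toSubgraph := by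
  have hmem : ∀ {x y}, p.toSubgraph.Adj x y → x ∈ p.support := fun hxy =>
    p.mem_verts_toSubgraph.mp hxy.fst_mem
  ext x y
  · simp only [Walk.toSubgraph, Subgraph.induce_verts, Subgraph.verts_sup, subgraphOfAdj_verts,
      verts_toSubgraph, Set.mem_sdiff, Set.mem_union, Set.mem_insert_iff, Set.mem_singleton_iff,
      Set.mem_ofPred_eq]
    refine ⟨fun ⟨hx, hxu⟩ => ?_, fun hx => ⟨.inr hx, fun hxu => hu (hxu ▸ hx)⟩⟩
    rcases hx with (hxu' | rfl) | hx
    exacts [absurd hxu' hxu, p.start_mem_support, hx]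
  · simp only [Subgraph.deleteVerts_adj, Walk.toSubgraph, Subgraph.sup_adj, subgraphOfAdj_adj,
      Set.mem_singleton_iff]
    constructor
    · rintro ⟨-, hx, -, hy, h | h⟩
      · simp only [Sym2.eq, Sym2.rel_iff'] at h
        rcases h with ⟨rfl, -⟩ | ⟨rfl, -⟩ <;> contradiction
      · exact h
    · intro hxy
      exact ⟨.inr hxy.fst_mem, fun hx => hu (hx ▸ hmem hxy), .inr hxy.snd_mem,
        fun hy => hu (hy ▸ hmem hxy.symm), .inr hxy⟩

theorem IsPath.connected_toSubgraph_deleteVerts {u w v : V} {p : G.Walk u w} (hp : p.IsPath)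
    (hwv : w ≠ v) (hv : v ∈ p.support → v = u) : (p.toSubgraph.deleteVerts {v}).Connected := by
  by_cases hvp : v ∈ p.support
  · obtain rfl := hv hvp
    cases p with
    | nil => exact absurd rfl hwv
    | cons h q =>
      rw [toSubgraph_cons_deleteVerts h q ((cons_isPath_iff h q).mp hp).2]
      exact q.toSubgraph_connected
  · rw [Subgraph.deleteVerts_of_disjoint (by simpa using hvp)]
    exact p.toSubgraph_connected

theorem exists_eq_append_forall_mem_eq (S : Set V) {u v : V} (p : G.Walk u v) (hv : v ∈ S) :
    ∃ c ∈ S, ∃ (p₁ : G.Walk u c) (p₂ : G.Walk c v),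
      p = p₁.append p₂ ∧ ∀ w ∈ p₁.support, w ∈ S → w = c := by
  classical
  obtain ⟨c, hcS, hc, hfirst⟩ :=
    p.exists_mem_support_forall_mem_support_imp_eq {w ∈ p.support.toFinset | w ∈ S}
      ⟨v, by simp [hv]⟩
  refine ⟨c, (Finset.mem_filter.mp hcS).2, _, _, (p.take_spec hc).symm, fun w hw hwS => ?_⟩
  exact hfirst w (by simp [p.support_takeUntil_subset_support hc hw, hwS]) hw

end Walk

namespace Subgraph

theorem connected_deleteVerts_sup_toSubgraph {H : G.Subgraph} {u w v : V} {p : G.Walk u w}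
    (hH : (H.deleteVerts {v}).Connected) (hp : p.IsPath) (hw : w ∈ H.verts) (hwv : w ≠ v)
    (hv : v ∈ p.support → v = u) : ((H ⊔ p.toSubgraph).deleteVerts {v}).Connected := by
  rw [deleteVerts_sup]
  exact connected_sup hH.preconnected (hp.connected_toSubgraph_deleteVerts hwv hv).preconnected
    ⟨w, by simp [hw, hwv]⟩

end Subgraph

end SimpleGraph

open Subgraph Walk

theorem IsBiconnected.sup_toSubgraph_of_isPath {V : Type} {G : SimpleGraph V} {B : G.Subgraph}
    (hB : IsBiconnected G B) {a b : V} (ha : a ∈ B.verts) (hb : b ∈ B.verts) (hab : a ≠ b)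
    {q : G.Walk a b} (hq : q.IsPath) (hint : ∀ w ∈ q.support, w ∈ B.verts → w = a ∨ w = b) :
    IsBiconnected G (B ⊔ q.toSubgraph) := by
  classical
  have hBconn : B.Connected := Subgraph.connected_iff'.mpr hB.1
  have hBdel : ∀ v ∈ B.verts, (B.deleteVerts {v}).Connected := fun v hv =>
    Subgraph.connected_iff'.mpr (hB.2 v hv)
  refine ⟨(connected_sup hBconn.preconnected q.toSubgraph_connected.preconnected
    ⟨a, ha, q.start_mem_verts_toSubgraph⟩).coe, fun v hv => Connected.coe ?_⟩
  -- A vertex of `B` can lie on the ear only as an endpoint; an interior vertex splits the ear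
  -- into two paths hanging off `B` at `a` and at `b`.
  by_cases hvB : v ∈ B.verts
  · by_cases hvb : v = b
    · subst hvb
      rw [← toSubgraph_reverse]
      exact connected_deleteVerts_sup_toSubgraph (hBdel v hvB) hq.reverse ha hab (fun _ => rfl)
    · exact connected_deleteVerts_sup_toSubgraph (hBdel v hvB) hq hb (Ne.symm hvb)
        fun hvq => (hint v hvq hvB).resolve_right hvb
  · have hvq : v ∈ q.support := by
      simpa [hvB] using hv
    rw [← q.take_spec hvq, toSubgraph_append, ← sup_assoc,
      ← toSubgraph_reverse (q.takeUntil v hvq)]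
    refine connected_deleteVerts_sup_toSubgraph ?_ (hq.dropUntil hvq) (.inl hb)
      (fun h => hvB (h ▸ hb)) fun _ => rfl
    refine connected_deleteVerts_sup_toSubgraph ?_ (hq.takeUntil hvq).reverse ha
      (fun h => hvB (h ▸ ha)) fun _ => rfl
    rw [deleteVerts_of_disjoint (by simpa using hvB)]
    exact hBconn

namespace IsBiconnectedComponent

variable {V : Type} {G : SimpleGraph V} {B : G.Subgraph}

theorem toSubgraph_le_of_isPath (hB : IsBiconnectedComponent G B) {a b : V} (ha : a ∈ B.verts)
    (hb : b ∈ B.verts) (hab : a ≠ b) {q : G.Walk a b} (hq : q.IsPath)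
    (hint : ∀ w ∈ q.support, w ∈ B.verts → w = a ∨ w = b) : q.toSubgraph ≤ B :=
  hB.2 _ (hB.1.sup_toSubgraph_of_isPath ha hb hab hq hint) le_sup_left ▸ le_sup_right

theorem adj_of_mem (hB : IsBiconnectedComponent G B) {x y : V} (hxy : G.Adj x y)
    (hx : x ∈ B.verts) (hy : y ∈ B.verts) : B.Adj x y :=
  (hB.toSubgraph_le_of_isPath hx hy hxy.ne hxy.isPath_toWalk (by simp)).2 (by simp)

theorem mem_of_mem_support (hB : IsBiconnectedComponent G B) {x y : V} {p : G.Walk x y}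
    (hp : p.IsPath) (hx : x ∈ B.verts) (hy : y ∈ B.verts) : ∀ w ∈ p.support, w ∈ B.verts := by
  induction p with
  | nil => simpa using hx
  | @cons x m y h r ih =>
    suffices hm : m ∈ B.verts by simpa [hx] using ih hp.of_cons hm hy
    obtain ⟨c, hc, r₁, r₂, rfl, hfirst⟩ := r.exists_eq_append_forall_mem_eq B.verts hy
    rw [← cons_append] at hp
    have hxc : x ≠ c := by
      rintro rfl
      simp at hp
    refine (hB.toSubgraph_le_of_isPath hx hc hxc hp.of_append_left ?_).1 (by simp)
    simp only [support_cons, List.mem_cons, forall_eq_or_imp, true_or, implies_true, true_and]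
    exact fun w hw hwB => .inr (hfirst w hw hwB)

end IsBiconnectedComponent

theorem induced_subtree_spanning_tree_of_block_general {V : Type}
    (G : SimpleGraph V)
    (T : SimpleGraph V) (hTG : T ≤ G) (hT : T.IsTree)
    (B : G.Subgraph) (hB : IsBiconnectedComponent G B) :
    (T.induce B.verts).IsTree ∧ T.induce B.verts ≤ B.coe := by
  classical
  have : Nonempty B.verts := hB.1.1.nonempty
  have hconn : (T.induce B.verts).Connected := by
    refine ⟨fun ⟨x, hx⟩ ⟨y, hy⟩ => ?_⟩
    obtain ⟨p, hp⟩ := (hT.connected.preconnected x y).some.toPath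
    exact (p.induce B.verts fun w hw => hB.mem_of_mem_support (hp.mapLe hTG) hx hy w
      (by simpa using hw)).reachable
  exact ⟨⟨hconn, hT.isAcyclic.induce _⟩, fun ⟨x, hx⟩ ⟨y, hy⟩ h => hB.adj_of_mem (hTG h) hx hy⟩

/-- Let `G` be a finite connected simple graph, `T` a spanning tree
of `G`, and `B` a nontrivial biconnected component of `G` with vertex set `V_B`.
Then `T[V_B]`, the subgraph of `T` induced by `V_B`, is a spanning tree of `B`:
it is a tree (on all of the vertex set `V_B`), and it is a subgraph of `B`. -/
theorem induced_subtree_spanning_tree_of_block {V : Type} [Fintype V]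
    (G : SimpleGraph V) (hG : G.Connected)
    (T : SimpleGraph V) (hTG : T ≤ G) (hT : T.IsTree)
    (B : G.Subgraph) (hB : IsBiconnectedComponent G B)
    (hBnontriv : 3 ≤ B.verts.ncard) :
    (T.induce B.verts).IsTree ∧ T.induce B.verts ≤ B.coe :=
  induced_subtree_spanning_tree_of_block_general G T hTG hT B hB
end

section
/- Let G = (V,E) be a finite connected simple graph and s ∈ V. Then the layering graph H of G with respect to s is a tree, i.e., H is connected and acyclic. -/
open SimpleGraph

/-- `u` and `v` are layering-equivalent w.r.t. source `s`: they lie at the same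
distance `i` from `s` and are joined by a path all of whose (intermediate)
vertices are at distance at least `i` from `s`. -/
def LayerEquiv {V : Type} (G : SimpleGraph V) (s u v : V) : Prop :=
  G.dist s u = G.dist s v ∧
    ∃ p : G.Walk u v, p.IsPath ∧ ∀ w ∈ p.support, G.dist s u ≤ G.dist s w

/-- The layering class of the vertex `v` w.r.t. source `s`. -/
def layeringClassOf {V : Type} (G : SimpleGraph V) (s v : V) : Set V :=
  {u | LayerEquiv G s v u}

/-- `C` is a layering class of `G` w.r.t. source `s`. -/
def IsLayeringClass {V : Type} (G : SimpleGraph V) (s : V) (C : Set V) : Prop :=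
  ∃ v, C = layeringClassOf G s v

/-- The layering graph `H`: vertices are the layering classes, two distinct
classes being adjacent iff `G` has an edge with one endpoint in each. -/
def layeringGraph {V : Type} (G : SimpleGraph V) (s : V) :
    SimpleGraph {C : Set V // IsLayeringClass G s C} where
  Adj C D := C ≠ D ∧ ∃ u ∈ C.1, ∃ w ∈ D.1, G.Adj u w
  symm := by
    constructor
    rintro C D ⟨hne, u, hu, w, hw, h⟩
    exact ⟨hne.symm, w, hw, u, hu, h.symm⟩
  loopless := by constructor; rintro C ⟨hne, -⟩; exact hne rfl

/-!
Every edge of the layering graph joins consecutive layers, since an edge of `G` inside one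
layer merges two classes. Every class on layer `i > 0` has exactly one neighbour on layer
`i - 1`: the penultimate vertex of a shortest path from `s` supplies one, and two such
neighbours coincide, since a path inside the class (at layer `≥ i`) extended by the two edges
down joins them while staying at layer `≥ i - 1`.
Descending layers reaches the class of `s`, so the layering graph is connected, and it is
acyclic because the highest class on a cycle would have two distinct lower neighbours.
-/

namespace SimpleGraph

variable {V : Type*} {G : SimpleGraph V} {s u v : V}

theorem isAcyclic_of_unique_lower_neighbor (f : V → ℕ)
    (hne : ∀ ⦃x y⦄, G.Adj x y → f x ≠ f y)
    (huniq : ∀ ⦃x y z⦄, G.Adj y x → G.Adj z x → f y < f x → f z < f x → y = z) :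
    G.IsAcyclic := by
  classical
  intro v c hc
  obtain ⟨m, hm, hmax⟩ := c.support.toFinset.exists_max_image f ⟨v, by simp⟩
  rw [List.mem_toFinset] at hm
  set c' := c.rotate m hm
  have hc' : c'.IsCycle := hc.rotate hm
  have hnil : ¬c'.Nil := hc'.not_nil
  have lower : ∀ ⦃x⦄, x ∈ c'.support → G.Adj x m → f x < f m := fun x hx hadj =>
    lt_of_le_of_ne (hmax x (by simpa [c'] using hx)) (hne hadj)
  exact hc'.snd_ne_penultimate <| huniq (c'.adj_snd hnil).symm (c'.adj_penultimate hnil)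
    (lower (c'.getVert_mem_support 1) (c'.adj_snd hnil).symm)
    (lower (c'.getVert_mem_support _) (c'.adj_penultimate hnil))

theorem preconnected_of_exists_lower_neighbor (f : V → ℕ)
    (hzero : ∀ ⦃x y⦄, f x = 0 → f y = 0 → x = y)
    (hlower : ∀ x, 0 < f x → ∃ y, G.Adj x y ∧ f y < f x) :
    G.Preconnected := by
  have reach_zero : ∀ n x, f x = n → ∃ r, f r = 0 ∧ G.Reachable x r := by
    intro n
    induction n using Nat.strong_induction_on with
    | _ n ih =>
      intro x hx
      rcases Nat.eq_zero_or_pos n with rfl | hpos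
      · exact ⟨x, hx, .rfl⟩
      · obtain ⟨y, hxy, hy⟩ := hlower x (hx ▸ hpos)
        obtain ⟨r, hr, hyr⟩ := ih (f y) (hx ▸ hy) y rfl
        exact ⟨r, hr, hxy.reachable.trans hyr⟩
  intro x y
  obtain ⟨r, hr, hxr⟩ := reach_zero _ x rfl
  obtain ⟨r', hr', hyr'⟩ := reach_zero _ y rfl
  exact hxr.trans (hzero hr hr' ▸ hyr'.symm)

lemma Adj.dist_eq_add_one_of_dist_lt (h : G.Adj u v) (hlt : G.dist s u < G.dist s v) :
    G.dist s v = G.dist s u + 1 := by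
  have := h.diff_dist_adj (u := s)
  omega

lemma Connected.exists_adj_dist_add_one (hG : G.Connected) (hv : 0 < G.dist s v) :
    ∃ u, G.Adj u v ∧ G.dist s u + 1 = G.dist s v := by
  obtain ⟨p, hp⟩ := hG.exists_walk_length_eq_dist s v
  have hnil : ¬p.Nil := fun h => by simp [Walk.length_eq_zero_iff.mpr h] at hp; omega
  have hdrop := p.length_dropLast_add_one hnil
  have hle := dist_le p.dropLast
  have hpen := (p.adj_penultimate hnil).diff_dist_adj (u := s)
  exact ⟨p.penultimate, p.adj_penultimate hnil, by omega⟩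

end SimpleGraph

namespace LayerEquiv

variable {V : Type} {G : SimpleGraph V} {s u v w : V}

lemma of_walk (hd : G.dist s u = G.dist s v) (p : G.Walk u v)
    (hp : ∀ x ∈ p.support, G.dist s u ≤ G.dist s x) : LayerEquiv G s u v := by
  classical
  exact ⟨hd, p.bypass, p.bypass_isPath, fun x hx => hp x (p.support_bypass_subset_support hx)⟩

lemma refl (G : SimpleGraph V) (s v : V) : LayerEquiv G s v v :=
  ⟨rfl, .nil, .nil, by simp⟩

lemma symm (h : LayerEquiv G s u v) : LayerEquiv G s v u := by
  obtain ⟨hd, p, hp, hsupp⟩ := h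
  exact ⟨hd.symm, p.reverse, hp.reverse, fun x hx => hd ▸ hsupp x (by simpa using hx)⟩

lemma trans (huv : LayerEquiv G s u v) (hvw : LayerEquiv G s v w) : LayerEquiv G s u w := by
  obtain ⟨hd, p, -, hp⟩ := huv
  obtain ⟨hd', q, -, hq⟩ := hvw
  refine of_walk (hd.trans hd') (p.append q) fun x hx => ?_
  rcases (Walk.mem_support_append_iff p q).mp hx with hx | hx
  · exact hp x hx
  · exact hd ▸ hq x hx

lemma of_adj (h : G.Adj u v) (hd : G.dist s u = G.dist s v) : LayerEquiv G s u v :=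
  of_walk hd h.toWalk (by simp [hd])

lemma of_adj_of_adj {u' v' : V} (h : LayerEquiv G s u v) (hu : G.Adj u' u) (hv : G.Adj v' v)
    (hu' : G.dist s u' < G.dist s u) (hv' : G.dist s v' < G.dist s v) :
    LayerEquiv G s u' v' := by
  obtain ⟨hd, p, -, hp⟩ := h
  have := hu.dist_eq_add_one_of_dist_lt hu'
  have := hv.dist_eq_add_one_of_dist_lt hv'
  refine of_walk (by omega) (.cons hu (p.concat hv.symm)) fun x hx => ?_
  simp only [Walk.support_cons, Walk.support_concat, List.mem_cons,
    List.mem_append, List.not_mem_nil, or_false] at hx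
  rcases hx with rfl | hx | rfl
  · rfl
  · have := hp x hx; omega
  · omega

end LayerEquiv

section LayeringClass

variable {V : Type} {G : SimpleGraph V} {s u v w : V}

lemma layeringClassOf_eq (h : LayerEquiv G s u v) :
    layeringClassOf G s u = layeringClassOf G s v :=
  Set.ext fun _ => ⟨h.symm.trans, h.trans⟩

abbrev LayeringClass (G : SimpleGraph V) (s : V) : Type := {C : Set V // IsLayeringClass G s C}

namespace LayeringClass

def of (G : SimpleGraph V) (s v : V) : LayeringClass G s := ⟨layeringClassOf G s v, v, rfl⟩

lemma mem_of_self (G : SimpleGraph V) (s v : V) : v ∈ (of G s v).1 := LayerEquiv.refl G s v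

noncomputable def rep (C : LayeringClass G s) : V := C.2.choose

lemma rep_mem (C : LayeringClass G s) : C.rep ∈ C.1 :=
  C.2.choose_spec ▸ LayerEquiv.refl G s C.rep

lemma layerEquiv_rep (C : LayeringClass G s) (hu : u ∈ C.1) : LayerEquiv G s C.rep u := by
  rw [C.2.choose_spec] at hu
  exact hu

lemma eq_of_layerEquiv {C D : LayeringClass G s} (hu : u ∈ C.1) (hw : w ∈ D.1)
    (h : LayerEquiv G s u w) : C = D := by
  apply Subtype.ext
  rw [C.2.choose_spec, D.2.choose_spec]
  exact layeringClassOf_eq (((C.layerEquiv_rep hu).trans h).trans (D.layerEquiv_rep hw).symm)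

noncomputable def layer (C : LayeringClass G s) : ℕ := G.dist s C.rep

lemma dist_eq_layer {C : LayeringClass G s} (hu : u ∈ C.1) : G.dist s u = C.layer :=
  (C.layerEquiv_rep hu).1.symm

lemma eq_of_layer_eq_zero (hG : G.Connected) {C : LayeringClass G s} (hC : C.layer = 0) :
    C = of G s s :=
  eq_of_layerEquiv C.rep_mem (mem_of_self G s s) <| by
    rw [← (hG s C.rep).dist_eq_zero_iff.mp hC]
    exact LayerEquiv.refl G s s

end LayeringClass

open LayeringClass

lemma layeringGraph_adj_layer_ne {C D : LayeringClass G s} (h : (layeringGraph G s).Adj C D) :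
    C.layer ≠ D.layer := by
  obtain ⟨hne, u, hu, w, hw, huw⟩ := h
  rw [← dist_eq_layer hu, ← dist_eq_layer hw]
  exact fun hd => hne (eq_of_layerEquiv hu hw (.of_adj huw hd))

lemma layeringGraph_lower_neighbor_unique {C D D' : LayeringClass G s}
    (h : (layeringGraph G s).Adj D C) (h' : (layeringGraph G s).Adj D' C)
    (hlt : D.layer < C.layer) (hlt' : D'.layer < C.layer) : D = D' := by
  obtain ⟨-, u, hu, w, hw, huw⟩ := h
  obtain ⟨-, u', hu', w', hw', huw'⟩ := h'
  rw [← dist_eq_layer hu, ← dist_eq_layer hw] at hlt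
  rw [← dist_eq_layer hu', ← dist_eq_layer hw'] at hlt'
  have hww' : LayerEquiv G s w w' := (C.layerEquiv_rep hw).symm.trans (C.layerEquiv_rep hw')
  exact eq_of_layerEquiv hu hu' (hww'.of_adj_of_adj huw huw' hlt hlt')

lemma layeringGraph_exists_lower_neighbor (hG : G.Connected) {C : LayeringClass G s}
    (hC : 0 < C.layer) :
    ∃ D : LayeringClass G s, (layeringGraph G s).Adj C D ∧ D.layer < C.layer := by
  obtain ⟨u, hu, hdu⟩ := hG.exists_adj_dist_add_one hC
  have hlt : (of G s u).layer < C.layer := by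
    rw [← dist_eq_layer (mem_of_self G s u), ← dist_eq_layer C.rep_mem]
    omega
  have hne : C ≠ of G s u := fun h => (h ▸ hlt).false
  exact ⟨of G s u, ⟨hne, C.rep, C.rep_mem, u, mem_of_self G s u, hu.symm⟩, hlt⟩

end LayeringClass

theorem layeringGraph_isTree_general {V : Type}
    (G : SimpleGraph V) (hG : G.Connected) (s : V) :
    (layeringGraph G s).IsTree := by
  have : Nonempty (LayeringClass G s) := ⟨.of G s s⟩
  have hzero {C D : LayeringClass G s} (hC : C.layer = 0) (hD : D.layer = 0) : C = D :=
    (LayeringClass.eq_of_layer_eq_zero hG hC).trans (LayeringClass.eq_of_layer_eq_zero hG hD).symm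
  exact ⟨⟨preconnected_of_exists_lower_neighbor LayeringClass.layer (fun _ _ => hzero)
      (fun _ => layeringGraph_exists_lower_neighbor hG)⟩,
    isAcyclic_of_unique_lower_neighbor LayeringClass.layer
      (fun _ _ => layeringGraph_adj_layer_ne) (fun _ _ _ => layeringGraph_lower_neighbor_unique)⟩

/-- Let `G` be a finite connected simple graph and `s` a vertex.
Then the layering graph `H` of `G` with respect to `s` is a tree. -/
theorem layeringGraph_isTree {V : Type} [Fintype V]
    (G : SimpleGraph V) (hG : G.Connected) (s : V) :
    (layeringGraph G s).IsTree :=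
  layeringGraph_isTree_general G hG s
end

section
/- Let G = (V,E) be a finite connected simple graph with maximum degree at most d and tree-length at most t, and let s ∈ V. Then every layering class of G with respect to s contains at most Σ_{m=0}^{3t+1} d^m vertices. -/
open SimpleGraph

/-- A tree decomposition of a graph `G`, with decomposition tree indexed by `ι`. -/
structure TreeDecomp {V : Type} (G : SimpleGraph V) (ι : Type) : Type where
  /-- the decomposition tree -/
  tree : SimpleGraph ι
  /-- the decomposition tree is a tree -/
  isTree : tree.IsTree
  /-- the bags -/
  bag : ι → Set V
  /-- every vertex of `G` belongs to some bag -/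
  bag_cover : ∀ v : V, ∃ t, v ∈ bag t
  /-- both endpoints of every edge of `G` lie in a common bag -/
  bag_edge : ∀ ⦃u v : V⦄, G.Adj u v → ∃ t, u ∈ bag t ∧ v ∈ bag t
  /-- the nodes whose bag contains a given vertex induce a connected subtree -/
  bag_conn : ∀ v : V, (tree.induce {t | v ∈ bag t}).Connected

/-- `G` has a tree decomposition all of whose bags have diameter at most `ℓ` in `G`. -/
def HasTDLength {V : Type} (G : SimpleGraph V) (ℓ : ℕ) : Prop :=
  ∃ (ι : Type) (td : TreeDecomp G ι), ∀ t, ∀ u ∈ td.bag t, ∀ v ∈ td.bag t, G.dist u v ≤ ℓ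

/-- The tree-length of `G`: the minimum length over all tree decompositions of `G`. -/
noncomputable def treeLength {V : Type} (G : SimpleGraph V) : ℕ :=
  sInf {ℓ | HasTDLength G ℓ}

/-! Let `u`, `v` be layering-equivalent at level `i`, joined by a path `p` all of whose vertices
are at distance at least `i` from `s`. The tree nodes whose bags meet `p` form a subtree; the
first node of that subtree on the tree path from a node whose bag contains `s` gives a bag `B`
that meets `p` and that every walk from `s` to `p` passes through. A geodesic from `s` to `u`
then meets `B` in a vertex `x`, and comparing with a vertex of `B ∩ p`, which is no closer to `s`
than `u`, gives `d(x, u) ≤ t`. The same holds for `v`, so `d(u, v) ≤ 3t`, and the class lies in a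
ball of radius `3t + 1`, which has at most `∑_{m ≤ 3t+1} d^m` vertices. -/

open Finset

namespace SimpleGraph

variable {V : Type} {G : SimpleGraph V}

lemma exists_walk_support_subset_of_preconnected_induce {S : Set V}
    (h : (G.induce S).Preconnected) {x y : V} (hx : x ∈ S) (hy : y ∈ S) :
    ∃ q : G.Walk x y, ∀ n ∈ q.support, n ∈ S := by
  obtain ⟨q⟩ := h ⟨x, hx⟩ ⟨y, hy⟩
  refine ⟨q.map (Embedding.induce S).toHom, fun n hn => ?_⟩
  obtain ⟨⟨n, hnS⟩, -, rfl⟩ := List.mem_map.mp (Walk.support_map _ q ▸ hn)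
  exact hnS

lemma Walk.exists_walk_compl_adj_mem {N : Set V} {x y : V} (q : G.Walk x y)
    (hx : x ∉ N) (hy : y ∈ N) :
    ∃ a b, G.Adj a b ∧ b ∈ N ∧ ∃ r : G.Walk x a, ∀ n ∈ r.support, n ∉ N := by
  induction q with
  | nil => exact absurd hy hx
  | @cons x z y hxz q ih =>
    by_cases hz : z ∈ N
    · exact ⟨x, z, hxz, hz, Walk.nil, by simpa using hx⟩
    obtain ⟨a, b, hab, hb, r, hr⟩ := ih hz hy
    refine ⟨a, b, hab, hb, Walk.cons hxz r, fun n hn => ?_⟩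
    rw [Walk.support_cons, List.mem_cons] at hn
    rcases hn with rfl | hn
    exacts [hx, hr n hn]

lemma Reachable.exists_adj_dist_lt {c u : V} (hr : G.Reachable c u) (hne : c ≠ u) :
    ∃ w, G.Adj u w ∧ G.dist c w < G.dist c u := by
  obtain ⟨p, hp⟩ := hr.symm.exists_walk_length_eq_dist
  have hnil : ¬ p.Nil := Walk.not_nil_of_ne hne.symm
  refine ⟨p.snd, p.adj_snd hnil, ?_⟩
  calc G.dist c p.snd = G.dist p.snd c := dist_comm
    _ ≤ p.tail.length := dist_le _
    _ < p.length := by rw [← p.length_tail_add_one hnil]; omega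
    _ = G.dist c u := hp.trans dist_comm

lemma Connected.card_filter_dist_le_le [Fintype V] [DecidableRel G.Adj]
    (hG : G.Connected) {d : ℕ} (hdeg : ∀ v, G.degree v ≤ d) (c : V) (r : ℕ) :
    #{u | G.dist c u ≤ r} ≤ ∑ m ∈ range (r + 1), d ^ m := by
  classical
  induction r with
  | zero =>
    have : ({u | G.dist c u ≤ 0} : Finset V) = {c} := by
      ext u
      simp only [mem_filter, mem_univ, true_and, Nat.le_zero, hG.dist_eq_zero_iff,
        mem_singleton, eq_comm]
    rw [this, card_singleton]
    simp
  | succ r ih =>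
    have hsub : ({u | G.dist c u ≤ r + 1} : Finset V) ⊆
        insert c (({u | G.dist c u ≤ r} : Finset V).biUnion fun w => G.neighborFinset w) := by
      intro u hu
      rw [mem_filter] at hu
      rcases eq_or_ne c u with rfl | hne
      · exact mem_insert_self _ _
      obtain ⟨w, huw, hw⟩ := (hG c u).exists_adj_dist_lt hne
      refine mem_insert_of_mem (mem_biUnion.mpr ⟨w, ?_, ?_⟩)
      · rw [mem_filter]
        exact ⟨mem_univ _, by omega⟩
      · exact (mem_neighborFinset _ _ _).mpr huw.symm
    calc #{u | G.dist c u ≤ r + 1}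
        ≤ #(({u | G.dist c u ≤ r} : Finset V).biUnion fun w => G.neighborFinset w) + 1 :=
          (card_le_card hsub).trans (card_insert_le _ _)
      _ ≤ #{u | G.dist c u ≤ r} * d + 1 := by
          gcongr
          exact card_biUnion_le.trans (sum_le_card_nsmul _ _ _ fun v _ => hdeg v)
      _ ≤ (∑ m ∈ range (r + 1), d ^ m) * d + 1 := by gcongr
      _ = ∑ m ∈ range (r + 2), d ^ m := by
          rw [sum_range_succ' _ (r + 1), sum_mul]
          simp [pow_succ]

lemma Walk.dist_add_dist_of_mem_support {s u x : V} (W : G.Walk s u)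
    (hW : W.length = G.dist s u) (hx : x ∈ W.support) :
    G.dist s x + G.dist x u = G.dist s u := by
  classical
  have hsplit := congrArg Walk.length (W.take_spec hx)
  rw [Walk.length_append] at hsplit
  have h1 : G.dist s x ≤ (W.takeUntil x hx).length := dist_le _
  have h2 : G.dist x u ≤ (W.dropUntil x hx).length := dist_le _
  have h3 := (W.takeUntil x hx).reachable.dist_triangle_left u
  omega

lemma Walk.dist_le_dist_of_mem_support (hG : G.Connected) {s u x z : V} (W : G.Walk s u)
    (hW : W.length = G.dist s u) (hx : x ∈ W.support) (hz : G.dist s u ≤ G.dist s z) :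
    G.dist x u ≤ G.dist x z := by
  have := W.dist_add_dist_of_mem_support hW hx
  have := hG.dist_triangle (u := s) (v := x) (w := z)
  omega

end SimpleGraph

namespace TreeDecomp

variable {V ι : Type} {G : SimpleGraph V} (td : TreeDecomp G ι)

lemma exists_walk_mem_bag {w : V} {n₁ n₂ : ι} (h₁ : w ∈ td.bag n₁) (h₂ : w ∈ td.bag n₂) :
    ∃ q : td.tree.Walk n₁ n₂, ∀ n ∈ q.support, w ∈ td.bag n :=
  exists_walk_support_subset_of_preconnected_induce (td.bag_conn w).preconnected h₁ h₂

def nodesMeeting {u v : V} (p : G.Walk u v) : Set ι :=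
  {n | ∃ w ∈ p.support, w ∈ td.bag n}

lemma connected_induce_nodesMeeting {u v : V} (p : G.Walk u v) :
    (td.tree.induce (td.nodesMeeting p)).Connected := by
  induction p with
  | @nil u =>
    have hnil : td.nodesMeeting (Walk.nil : G.Walk u u) = {n | u ∈ td.bag n} := by
      ext n
      simp [nodesMeeting]
    exact hnil ▸ td.bag_conn u
  | @cons u u' v huu' p ih =>
    have hunion : td.nodesMeeting (Walk.cons huu' p) = {n | u ∈ td.bag n} ∪ td.nodesMeeting p := by
      ext n
      simp [nodesMeeting]
    obtain ⟨n, hu, hu'⟩ := td.bag_edge huu'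
    rw [hunion]
    exact induce_union_connected (td.bag_conn u).preconnected ih.preconnected
      ⟨n, hu, u', p.start_mem_support, hu'⟩

lemma exists_mem_support_mem_bag_of_separates {R : ι → Prop} {b : ι}
    (hsep : ∀ w n₁ n₂, w ∈ td.bag n₁ → w ∈ td.bag n₂ → ¬ R n₁ → R n₂ → w ∈ td.bag b)
    {x y : V} (W : G.Walk x y) (hx : ∃ n, ¬ R n ∧ x ∈ td.bag n) (hy : ∃ n, R n ∧ y ∈ td.bag n) :
    ∃ z ∈ W.support, z ∈ td.bag b := by
  obtain ⟨n₁, hn₁, hx⟩ := hx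
  induction W generalizing n₁ with
  | nil =>
    obtain ⟨n₂, hn₂, hy⟩ := hy
    exact ⟨_, Walk.start_mem_support _, hsep _ n₁ n₂ hx hy hn₁ hn₂⟩
  | @cons x x' y hxx' W ih =>
    by_cases hxR : ∃ n, R n ∧ x ∈ td.bag n
    · obtain ⟨n₂, hn₂, hx₂⟩ := hxR
      exact ⟨x, Walk.start_mem_support _, hsep x n₁ n₂ hx hx₂ hn₁ hn₂⟩
    obtain ⟨n, hxn, hx'n⟩ := td.bag_edge hxx'
    obtain ⟨z, hz, hzb⟩ := ih hy n (fun hn => hxR ⟨n, hn, hxn⟩) hx'n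
    exact ⟨z, List.mem_cons_of_mem _ hz, hzb⟩

lemma mem_bag_of_reachable_deleteEdges (a b : ι) {w : V} {n₁ n₂ : ι}
    (h₁ : w ∈ td.bag n₁) (h₂ : w ∈ td.bag n₂)
    (hn₁ : ¬ (td.tree.deleteEdges {s(a, b)}).Reachable b n₁)
    (hn₂ : (td.tree.deleteEdges {s(a, b)}).Reachable b n₂) : w ∈ td.bag b := by
  obtain ⟨q, hq⟩ := td.exists_walk_mem_bag h₁ h₂
  have hab : s(a, b) ∈ q.edges := by
    by_contra h
    exact hn₁ (hn₂.trans (reachable_deleteEdges_iff_exists_walk.mpr ⟨q, h⟩).symm)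
  exact hq b (q.snd_mem_support_of_mem_edges hab)

theorem exists_bag_separating {u v : V} (p : G.Walk u v) (s : V) :
    ∃ b, (∃ z ∈ p.support, z ∈ td.bag b) ∧
      ∀ w ∈ p.support, ∀ W : G.Walk s w, ∃ x ∈ W.support, x ∈ td.bag b := by
  obtain ⟨ts, hts⟩ := td.bag_cover s
  obtain ⟨tu, htu⟩ := td.bag_cover u
  set N := td.nodesMeeting p
  by_cases htsN : ts ∈ N
  · exact ⟨ts, htsN, fun w _ W => ⟨s, W.start_mem_support, hts⟩⟩
  obtain ⟨q⟩ := td.isTree.connected.preconnected ts tu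
  obtain ⟨a, b, hab, hbN, r, hr⟩ :=
    q.exists_walk_compl_adj_mem htsN ⟨u, p.start_mem_support, htu⟩
  set T' := td.tree.deleteEdges {s(a, b)}
  -- `N` is connected and misses `a`, so it lies on the side of `b`; `ts` lies on the side of `a`.
  have hN : ∀ n ∈ N, T'.Reachable b n := by
    intro n hn
    obtain ⟨q', hq'⟩ := exists_walk_support_subset_of_preconnected_induce
      (td.connected_induce_nodesMeeting p).preconnected hbN hn
    refine reachable_deleteEdges_iff_exists_walk.mpr ⟨q', fun h => ?_⟩
    exact hr a r.end_mem_support (hq' a (q'.fst_mem_support_of_mem_edges h))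
  have hts' : ¬ T'.Reachable b ts := by
    intro hb
    have hbridge : td.tree.IsBridge s(a, b) :=
      isAcyclic_iff_forall_isBridge.mp td.isTree.isAcyclic hab
    refine isBridge_iff.mp hbridge (hb.trans ?_).symm
    refine reachable_deleteEdges_iff_exists_walk.mpr ⟨r, fun h => ?_⟩
    exact hr b (r.snd_mem_support_of_mem_edges h) hbN
  refine ⟨b, hbN, fun w hw W => ?_⟩
  obtain ⟨tw, htw⟩ := td.bag_cover w
  exact td.exists_mem_support_mem_bag_of_separates
    (fun _ _ _ => td.mem_bag_of_reachable_deleteEdges a b) W ⟨ts, hts', hts⟩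
    ⟨tw, hN tw ⟨w, hw, htw⟩, htw⟩

end TreeDecomp

lemma HasTDLength.mono {V : Type} {G : SimpleGraph V} {ℓ ℓ' : ℕ} (h : HasTDLength G ℓ)
    (hℓ : ℓ ≤ ℓ') : HasTDLength G ℓ' := by
  obtain ⟨ι, td, hlen⟩ := h
  exact ⟨ι, td, fun n u hu v hv => (hlen n u hu v hv).trans hℓ⟩

lemma hasTDLength_diam {V : Type} [Finite V] {G : SimpleGraph V} (hG : G.Connected) :
    HasTDLength G G.diam := by
  have : Nonempty V := hG.nonempty
  have hediam : G.ediam ≠ ⊤ := connected_iff_ediam_ne_top.mp hG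
  refine ⟨Unit, ⟨⊥, .of_subsingleton, fun _ => Set.univ, fun _ => ⟨(), trivial⟩,
    fun _ _ _ => ⟨(), trivial, trivial⟩, fun u => ?_⟩, fun _ u _ v _ => dist_le_diam hediam⟩
  have : Nonempty {n : Unit | u ∈ Set.univ} := ⟨⟨(), Set.mem_univ u⟩⟩
  exact IsTree.of_subsingleton.connected

lemma hasTDLength_treeLength {V : Type} [Finite V] {G : SimpleGraph V} (hG : G.Connected) :
    HasTDLength G (treeLength G) :=
  Nat.sInf_mem (s := {ℓ | HasTDLength G ℓ}) ⟨_, hasTDLength_diam hG⟩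

theorem LayerEquiv.dist_le {V : Type} {G : SimpleGraph V} (hG : G.Connected) {ℓ : ℕ}
    (h : HasTDLength G ℓ) {s u v : V} (huv : LayerEquiv G s u v) :
    G.dist u v ≤ 3 * ℓ := by
  obtain ⟨ι, td, hlen⟩ := h
  obtain ⟨hdist, p, -, hfar⟩ := huv
  obtain ⟨b, ⟨z, hz, hzb⟩, hsep⟩ := td.exists_bag_separating p s
  obtain ⟨Wu, hWu⟩ := hG.exists_walk_length_eq_dist s u
  obtain ⟨Wv, hWv⟩ := hG.exists_walk_length_eq_dist s v
  obtain ⟨x, hxW, hxb⟩ := hsep u p.start_mem_support Wu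
  obtain ⟨y, hyW, hyb⟩ := hsep v p.end_mem_support Wv
  have hxu : G.dist x u ≤ ℓ :=
    (Wu.dist_le_dist_of_mem_support hG hWu hxW (hfar z hz)).trans (hlen b x hxb z hzb)
  have hyv : G.dist y v ≤ ℓ :=
    (Wv.dist_le_dist_of_mem_support hG hWv hyW (hdist ▸ hfar z hz)).trans (hlen b y hyb z hzb)
  calc G.dist u v ≤ G.dist u x + G.dist x y + G.dist y v := by
        linarith [hG.dist_triangle (u := u) (v := x) (w := v),
          hG.dist_triangle (u := x) (v := y) (w := v)]
    _ ≤ ℓ + ℓ + ℓ := by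
        gcongr
        · exact dist_comm.trans_le hxu
        · exact hlen b x hxb y hyb
    _ = 3 * ℓ := by ring

/-- If `G` is a finite connected simple graph with maximum degree
at most `d` and tree-length at most `t`, then every layering class of `G` with
respect to `s` contains at most `∑_{m=0}^{3t+1} d^m` vertices. -/
theorem layering_class_card_le {V : Type} [Fintype V]
    (G : SimpleGraph V) (hG : G.Connected) (d t : ℕ)
    (hdeg : ∀ v : V, (G.neighborSet v).ncard ≤ d)
    (htl : treeLength G ≤ t) (s : V) :
    ∀ C : Set V, IsLayeringClass G s C →
      C.ncard ≤ ∑ m ∈ Finset.range (3 * t + 2), d ^ m := by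
  classical
  rintro C ⟨v, rfl⟩
  have htd : HasTDLength G t := (hasTDLength_treeLength hG).mono htl
  have hdeg' : ∀ v, G.degree v ≤ d := fun v => by
    have h := hdeg v
    rw [Set.ncard_eq_toFinset_card'] at h
    exact h
  have hsub : layeringClassOf G s v ⊆ ({u | G.dist v u ≤ 3 * t + 1} : Finset V) := fun u hu => by
    simpa using (hu.dist_le hG htd).trans (Nat.le_succ _)
  calc (layeringClassOf G s v).ncard
      ≤ (({u | G.dist v u ≤ 3 * t + 1} : Finset V) : Set V).ncard := Set.ncard_le_ncard hsub
    _ = #{u | G.dist v u ≤ 3 * t + 1} := Set.ncard_coe_finset _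
    _ ≤ ∑ m ∈ range (3 * t + 2), d ^ m := hG.card_filter_dist_le_le hdeg' v _
end
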